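/- The centre-point property is expressible in GMSC: the program with rules X(0) :− □⊥ and X :− ◇X ∧ □X, with X appointed, accepts a pointed finite directed graph (G, w) if and only if there exists n ∈ ℕ such that every directed path starting from w reaches a node with no out-neighbours in exactly n steps. -/

import Mathlib

/-- A finite directed node-labeled graph: finite node set `V`, out-neighbour
finsets `adj v`, and a labeling of nodes by sets of node label symbols from `α`. -/
structure LGraph (α : Type) : Type 1 where
  V : Type
  fintypeV : Fintype V
  adj : V → Finset V
  label : V → Set α

attribute [instance] LGraph.fintypeV

/-- Formulas of graded modal logic GML over node label symbols `α`:
`⊤`, labels, negation, conjunction, and graded diamonds `◇_{≥k}`. -/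
inductive GML (α : Type) : Type where
  | top : GML α
  | lab : α → GML α
  | neg : GML α → GML α
  | and : GML α → GML α → GML α
  | dia : ℕ → GML α → GML α

/-- Truth of a GML formula at a node of a labeled graph; `dia k φ` (`◇_{≥k}φ`)
holds iff at least `k` out-neighbours satisfy `φ`. -/
def GML.sat {α : Type} (G : LGraph α) : GML α → G.V → Prop
  | .top, _ => True
  | .lab p, v => p ∈ G.label v
  | .neg φ, v => ¬ GML.sat G φ v
  | .and φ ψ, v => GML.sat G φ v ∧ GML.sat G ψ v
  | .dia k φ, v => ∃ s : Finset G.V, s ⊆ G.adj v ∧ k ≤ s.card ∧ ∀ u ∈ s, GML.sat G φ u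

/-- `⊥` as a GML formula. -/
def GML.bot {α : Type} : GML α := .neg .top

/-- `□φ := ¬◇_{≥1}¬φ`. -/
def GML.box {α : Type} (φ : GML α) : GML α := .neg (.dia 1 (.neg φ))

/-- `◇_{=n}φ := ◇_{≥n}φ ∧ ¬◇_{≥n+1}φ`. -/
def GML.diaEq {α : Type} (n : ℕ) (φ : GML α) : GML α := .and (.dia n φ) (.neg (.dia (n + 1) φ))

/-- Schemata of GMSC over node label symbols `α` and head predicates (schema variables) `ν`. -/
inductive Schema (α ν : Type) : Type where
  | top : Schema α ν
  | lab : α → Schema α ν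
  | var : ν → Schema α ν
  | neg : Schema α ν → Schema α ν
  | and : Schema α ν → Schema α ν → Schema α ν
  | dia : ℕ → Schema α ν → Schema α ν

/-- Substituting a GML formula for each head predicate of a schema. -/
def Schema.subst {α ν : Type} (σ : ν → GML α) : Schema α ν → GML α
  | .top => .top
  | .lab p => .lab p
  | .var X => σ X
  | .neg φ => .neg (φ.subst σ)
  | .and φ ψ => .and (φ.subst σ) (ψ.subst σ)
  | .dia k φ => .dia k (φ.subst σ)

/-- A GMSC program over node label symbols `α` with head predicates `ν`:
terminal clauses `X(0) :− term X`, iteration clauses `X :− iter X`, and a set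
`app` of appointed predicates. -/
structure Program (α ν : Type) where
  term : ν → GML α
  iter : ν → Schema α ν
  app : Set ν

/-- The `n`-th iteration formula `Xⁿ` of a head predicate `X`: `X⁰` is the terminal body,
and `X^{n+1}` is the iteration body with each head predicate `Y` replaced by `Yⁿ`. -/
def Program.iterFormula {α ν : Type} (P : Program α ν) : ℕ → ν → GML α
  | 0 => P.term
  | n + 1 => fun X => (P.iter X).subst (P.iterFormula n)

/-- The program accepts `(G, w)` iff some appointed predicate's iteration formula is
true at `w` in some round. -/
def Program.accepts {α ν : Type} (P : Program α ν) (G : LGraph α) (w : G.V) : Prop :=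
  ∃ X ∈ P.app, ∃ n : ℕ, GML.sat G (P.iterFormula n X) w

/-- `□φ` for schemata. -/
def Schema.box {α ν : Type} (φ : Schema α ν) : Schema α ν := .neg (.dia 1 (.neg φ))

/-- The GMSC program with a single head predicate `X`, rules `X(0) :− □⊥` and
`X :− ◇X ∧ □X`, with `X` appointed. -/
def centreProg (α : Type) : Program α Unit where
  term := fun _ => GML.box GML.bot
  iter := fun _ => Schema.and (Schema.dia 1 (Schema.var ())) (Schema.box (Schema.var ()))
  app := Set.univ

/-!
By induction on `n`, the iteration formula `Xⁿ` holds at `v` iff every walk from `v` reaches a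
dead end exactly at length `n`: `X⁰ = □⊥` says that `v` is a dead end, and `◇Xⁿ ∧ □Xⁿ` says that
`v` is not a dead end and all its out-neighbours have this property for `n`.
-/

namespace GML

variable {α : Type} (G : LGraph α)

theorem sat_dia_one {φ : GML α} {v : G.V} :
    sat G (.dia 1 φ) v ↔ ∃ u ∈ G.adj v, sat G φ u := by
  constructor
  · rintro ⟨s, hs, hcard, hφ⟩
    obtain ⟨u, hu⟩ := Finset.one_le_card.mp hcard
    exact ⟨u, hs hu, hφ u hu⟩
  · rintro ⟨u, hu, hφ⟩
    exact ⟨{u}, Finset.singleton_subset_iff.mpr hu, by simp, by simpa⟩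

theorem sat_box {φ : GML α} {v : G.V} : sat G φ.box v ↔ ∀ u ∈ G.adj v, sat G φ u := by
  change ¬ sat G (.dia 1 (.neg φ)) v ↔ _
  rw [sat_dia_one]
  simp only [sat, not_exists, not_and, not_not]

theorem sat_box_bot {v : G.V} : sat G (box bot) v ↔ G.adj v = ∅ := by
  simp [sat_box, bot, sat, Finset.eq_empty_iff_forall_notMem]

end GML

namespace LGraph

variable {α : Type} (G : LGraph α)

/-- The centre-point property of `(G, v)`, with `n` the common length of the maximal paths. -/
def HasUniformDepth (v : G.V) (n : ℕ) : Prop :=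
  ∀ l : List G.V, (v :: l).IsChain (fun a b => b ∈ G.adj a) →
    (G.adj (l.getLastD v) = ∅ ↔ l.length = n)

variable {G}

theorem hasUniformDepth_zero_iff {v : G.V} : G.HasUniformDepth v 0 ↔ G.adj v = ∅ := by
  refine ⟨fun h => (h [] (List.isChain_singleton v)).mpr rfl, fun h l hl => ?_⟩
  cases l with
  | nil => simpa using h
  | cons u l => simp [h] at hl

theorem hasUniformDepth_succ_iff {v : G.V} {n : ℕ} :
    G.HasUniformDepth v (n + 1) ↔
      (∃ u ∈ G.adj v, G.HasUniformDepth u n) ∧ ∀ u ∈ G.adj v, G.HasUniformDepth u n := by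
  have walk_cons (u : G.V) (l : List G.V) :
      (G.adj ((u :: l).getLastD v) = ∅ ↔ (u :: l).length = n + 1) ↔
        (G.adj (l.getLastD u) = ∅ ↔ l.length = n) := by
    rw [List.getLastD_cons, List.length_cons, Nat.add_right_cancel_iff]
  constructor
  · intro h
    have hall : ∀ u ∈ G.adj v, G.HasUniformDepth u n := fun u hu l hl =>
      (walk_cons u l).mp (h (u :: l) (List.isChain_cons_cons.mpr ⟨hu, hl⟩))
    have hne : G.adj v ≠ ∅ := fun hv => by simpa using (h [] (List.isChain_singleton v)).mp hv
    obtain ⟨u, hu⟩ := Finset.nonempty_iff_ne_empty.mpr hne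
    exact ⟨⟨u, hu, hall u hu⟩, hall⟩
  · rintro ⟨⟨u, hu, -⟩, hall⟩ l hl
    cases l with
    | nil => simpa using Finset.ne_empty_of_mem hu
    | cons u' l =>
      obtain ⟨hu', hl⟩ := List.isChain_cons_cons.mp hl
      exact (walk_cons u' l).mpr (hall u' hu' l hl)

end LGraph

theorem sat_centreProg_iterFormula_iff {α : Type} (G : LGraph α) (n : ℕ) (v : G.V) :
    GML.sat G ((centreProg α).iterFormula n ()) v ↔ G.HasUniformDepth v n := by
  induction n generalizing v with
  | zero => exact GML.sat_box_bot G |>.trans LGraph.hasUniformDepth_zero_iff.symm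
  | succ n ih =>
    simp only [LGraph.hasUniformDepth_succ_iff, ← ih]
    exact and_congr (GML.sat_dia_one G) (GML.sat_box G)

theorem centre_point_property (α : Type) (G : LGraph α) (w : G.V) :
    (centreProg α).accepts G w ↔
      ∃ n : ℕ, ∀ l : List G.V, List.Chain (fun a b => b ∈ G.adj a) w l →
        (G.adj (l.getLastD w) = ∅ ↔ l.length = n) := by
  constructor
  · rintro ⟨⟨⟩, -, n, h⟩
    exact ⟨n, (sat_centreProg_iterFormula_iff G n w).mp h⟩
  · rintro ⟨n, h⟩
    exact ⟨(), trivial, n, (sat_centreProg_iterFormula_iff G n w).mpr h⟩
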